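/- Let (X,ρ) be a metric space and {A_k} a bounded sequence of nonempty closed subsets of X. Let λ = {λ(n)} and μ = {μ(n)} be strictly increasing sequences of positive integers with lim_{n→∞} μ(n)/λ(n) = 1. Then {A_k} is Wijsman C_λ summable to A if and only if {A_k} is Wijsman C_μ summable to A. -/

import Mathlib

open Filter Metric

/-! If `|a k| ≤ M`, the partial sums `∑_{k ≤ m} a k` are `M`-Lipschitz in `m`. Hence
`cesaroMean a (μ n)` and `cesaroMean a (l n) * (l n / μ n)` differ by at most `M * |1 - l n / μ n|`,
which tends to `0` when `μ n / l n → 1`. -/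

theorem abs_sum_Icc_sub_sum_Icc_le {a : ℕ → ℝ} {M : ℝ} (hM : ∀ k, |a k| ≤ M) (b c : ℕ) :
    |∑ k ∈ Finset.Icc 1 b, a k - ∑ k ∈ Finset.Icc 1 c, a k| ≤ M * |(b : ℝ) - c| := by
  wlog hcb : c ≤ b generalizing b c
  · rw [abs_sub_comm, abs_sub_comm (b : ℝ)]
    exact this c b (by omega)
  have hsplit : ∑ k ∈ Finset.Icc 1 b, a k =
      ∑ k ∈ Finset.Icc 1 c, a k + ∑ k ∈ Finset.Ioc c b, a k := by
    simp only [show ∀ m, Finset.Icc 1 m = Finset.Ioc 0 m from Finset.Icc_add_one_left_eq_Ioc 0]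
    exact (Finset.sum_Ioc_consecutive _ c.zero_le hcb).symm
  calc |∑ k ∈ Finset.Icc 1 b, a k - ∑ k ∈ Finset.Icc 1 c, a k|
      = |∑ k ∈ Finset.Ioc c b, a k| := by rw [hsplit, add_sub_cancel_left]
    _ ≤ ∑ k ∈ Finset.Ioc c b, |a k| := Finset.abs_sum_le_sum_abs _ _
    _ ≤ (Finset.Ioc c b).card • M := Finset.sum_le_card_nsmul _ _ _ fun k _ => hM k
    _ = M * |(b : ℝ) - c| := by
      rw [Nat.card_Ioc, nsmul_eq_mul, Nat.cast_sub hcb, abs_of_nonneg (by simp [hcb]), mul_comm]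

noncomputable def cesaroMean (a : ℕ → ℝ) (m : ℕ) : ℝ := (1 / (m : ℝ)) * ∑ k ∈ Finset.Icc 1 m, a k

-- Holds for all `m n`, including the junk value `cesaroMean a 0 = 0`.
theorem cesaroMean_eq_mul_add (a : ℕ → ℝ) (m n : ℕ) :
    cesaroMean a m = cesaroMean a n * (n / m) +
      (∑ k ∈ Finset.Icc 1 m, a k - ∑ k ∈ Finset.Icc 1 n, a k) / m := by
  rcases eq_or_ne (n : ℝ) 0 with hn | hn
  · simp [cesaroMean, Nat.cast_eq_zero.mp hn, div_eq_inv_mul]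
  · simp only [cesaroMean]
    field_simp
    ring

theorem abs_sum_Icc_sub_sum_Icc_div_le {a : ℕ → ℝ} {M : ℝ} (hM : ∀ k, |a k| ≤ M) (m n : ℕ) :
    |(∑ k ∈ Finset.Icc 1 m, a k - ∑ k ∈ Finset.Icc 1 n, a k) / m| ≤ M * |1 - (n : ℝ) / m| := by
  have hM0 : 0 ≤ M := (abs_nonneg _).trans (hM 0)
  rcases eq_or_ne (m : ℝ) 0 with hm | hm
  · simpa [hm] using hM0
  rw [abs_div, div_le_iff₀ (abs_pos.mpr hm : (0 : ℝ) < |(m : ℝ)|), mul_assoc, ← abs_mul,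
    sub_mul, div_mul_cancel₀ _ hm, one_mul]
  exact abs_sum_Icc_sub_sum_Icc_le hM m n

theorem Filter.Tendsto.cesaroMean_comp {a : ℕ → ℝ} {M L : ℝ} (hM : ∀ k, |a k| ≤ M) {l μ : ℕ → ℕ}
    (h : Tendsto (fun n => cesaroMean a (l n)) atTop (nhds L))
    (hlμ : Tendsto (fun n => (l n : ℝ) / μ n) atTop (nhds 1)) :
    Tendsto (fun n => cesaroMean a (μ n)) atTop (nhds L) := by
  have herr : Tendsto (fun n => (∑ k ∈ Finset.Icc 1 (μ n), a k -
      ∑ k ∈ Finset.Icc 1 (l n), a k) / μ n) atTop (nhds 0) := by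
    refine squeeze_zero_norm (fun n => abs_sum_Icc_sub_sum_Icc_div_le hM _ _) ?_
    simpa using ((tendsto_const_nhds (x := (1 : ℝ))).sub hlμ).abs.const_mul M
  simpa [← cesaroMean_eq_mul_add] using (h.mul hlμ).add herr

theorem tendsto_cesaroMean_comp_iff {a : ℕ → ℝ} {M L : ℝ} (hM : ∀ k, |a k| ≤ M) {l μ : ℕ → ℕ}
    (hlim : Tendsto (fun n => (μ n : ℝ) / l n) atTop (nhds 1)) :
    Tendsto (fun n => cesaroMean a (l n)) atTop (nhds L) ↔
      Tendsto (fun n => cesaroMean a (μ n)) atTop (nhds L) :=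
  ⟨(·.cesaroMean_comp hM (by simpa using hlim.inv₀ one_ne_zero)), (·.cesaroMean_comp hM hlim)⟩

theorem stmt_2_general {X : Type*} [MetricSpace X] (A : ℕ → Set X) (S : Set X)
    (hbdd : ∀ x : X, ∃ M : ℝ, ∀ k, infDist x (A k) ≤ M)
    (l μ : ℕ → ℕ)
    (hlim : Tendsto (fun n => (μ n : ℝ) / (l n : ℝ)) atTop (nhds 1)) :
    (∀ x : X, Tendsto
      (fun n => (1 / (l n : ℝ)) * ∑ k ∈ Finset.Icc 1 (l n), infDist x (A k))
      atTop (nhds (infDist x S))) ↔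
    (∀ x : X, Tendsto
      (fun n => (1 / (μ n : ℝ)) * ∑ k ∈ Finset.Icc 1 (μ n), infDist x (A k))
      atTop (nhds (infDist x S))) := by
  refine forall_congr' fun x => ?_
  obtain ⟨M, hM⟩ := hbdd x
  exact tendsto_cesaroMean_comp_iff (fun k => (abs_of_nonneg infDist_nonneg).trans_le (hM k)) hlim

theorem stmt_2 {X : Type*} [MetricSpace X] (A : ℕ → Set X) (S : Set X)
    (hA : ∀ k, (A k).Nonempty ∧ IsClosed (A k)) (hS : S.Nonempty) (hSc : IsClosed S)
    (hbdd : ∀ x : X, ∃ M : ℝ, ∀ k, infDist x (A k) ≤ M)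
    (l μ : ℕ → ℕ) (hl : StrictMono l) (hl1 : ∀ n, 1 ≤ l n)
    (hμ : StrictMono μ) (hμ1 : ∀ n, 1 ≤ μ n)
    (hlim : Tendsto (fun n => (μ n : ℝ) / (l n : ℝ)) atTop (nhds 1)) :
    (∀ x : X, Tendsto
      (fun n => (1 / (l n : ℝ)) * ∑ k ∈ Finset.Icc 1 (l n), infDist x (A k))
      atTop (nhds (infDist x S))) ↔
    (∀ x : X, Tendsto
      (fun n => (1 / (μ n : ℝ)) * ∑ k ∈ Finset.Icc 1 (μ n), infDist x (A k))
      atTop (nhds (infDist x S))) :=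
  stmt_2_general A S hbdd l μ hlim
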